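/- arXiv:1312.3574 — 2 statements merged into one kernel-verified Lean document; each statement's English description precedes it below -/
import Mathlib

section
/- Let sequences u_m, v_m ≥ 0 satisfy the coupled recursion u_{m+1} ≤ (1 + Ch) u_m + C ε v_m + C ε^{ν+1}, v_{m+1} ≤ C u_m + (α + Cε) v_m + C ε^{ν+1}/h with 0 < α < 1, u_0 = v_0 = 0, constants C > 0, and ε ≤ c h for fixed c > 0. Then for h ≤ h₀ sufficiently small and all m with mh ≤ T, u_m ≤ C' ε^{ν+1}/h and v_m ≤ C' ε^{ν+1}/h, with C' depending only on C, c, α, T. -/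
/-!
Put `E = ε^{ν+1}/h` and `θ = 2Cc/(1-α)`. In the weighted sum `w = u + θ h v` the coupling term
`C ε v` of the `u`-recursion is absorbed by the contraction `1 - α` of the `v`-recursion (this is
where `ε ≤ c h` and `h` small enter), so `w_{m+1} ≤ (1 + K h) w_m + K h E` with `K = C(1+θ)`.
The discrete Grönwall inequality gives `u_m ≤ w_m ≤ K T e^{KT} E` for `m h ≤ T`, and then the
`v`-recursion, contracting with factor `(1+α)/2`, keeps `v_m` below its fixed point `O(E)`.
-/

open Real Finset

theorem weighted_sum_step_le {C α θ h ε E u v u' v' : ℝ} (hC : 0 ≤ C) (hθ : 0 ≤ θ) (hh : 0 ≤ h)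
    (hv : 0 ≤ v) (hcoupling : C * ε + θ * h * (α + C * ε) ≤ θ * h)
    (hu' : u' ≤ (1 + C * h) * u + C * ε * v + C * h * E)
    (hv' : v' ≤ C * u + (α + C * ε) * v + C * E) :
    u' + θ * h * v' ≤ (1 + C * (1 + θ) * h) * (u + θ * h * v) + C * (1 + θ) * h * E := by
  have hθh : 0 ≤ θ * h := mul_nonneg hθ hh
  have hv'_weighted := mul_le_mul_of_nonneg_left hv' hθh
  have hcoupling_v := mul_le_mul_of_nonneg_right hcoupling hv
  have hgrowth : 0 ≤ C * (1 + θ) * h * (θ * h * v) := by positivity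
  nlinarith

theorem le_mul_exp_of_le_one_add_mul {w : ℕ → ℝ} {K h E T : ℝ} (hK : 0 ≤ K) (hh : 0 ≤ h)
    (hE : 0 ≤ E) (h0 : w 0 = 0) (hstep : ∀ m, w (m + 1) ≤ (1 + K * h) * w m + K * h * E)
    {m : ℕ} (hm : m * h ≤ T) : w m ≤ K * T * exp (K * T) * E := by
  have hgronwall := discrete_gronwall (u := w) (c := fun _ ↦ K * h) (b := fun _ ↦ K * h * E)
    h0.ge (fun n _ ↦ hstep n) (fun _ _ ↦ by positivity) (fun _ _ ↦ by positivity) (Nat.zero_le m)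
  simp only [h0, zero_add, sum_const, Nat.card_Ico, Nat.sub_zero, nsmul_eq_mul] at hgronwall
  have hT : 0 ≤ T := (by positivity : (0 : ℝ) ≤ m * h).trans hm
  have hexp : exp (m * (K * h)) ≤ exp (K * T) := exp_le_exp.mpr (by nlinarith)
  calc w m ≤ m * (K * h * E) * exp (m * (K * h)) := hgronwall
    _ = K * E * (m * h) * exp (m * (K * h)) := by ring
    _ ≤ K * E * T * exp (K * T) := by gcongr
    _ = K * T * exp (K * T) * E := by ring

theorem le_div_one_sub_of_le_mul_add {v : ℕ → ℝ} {ρ b : ℝ} (hρ0 : 0 ≤ ρ) (hρ1 : ρ < 1)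
    (h0 : v 0 ≤ b / (1 - ρ)) {n : ℕ} (hstep : ∀ m < n, v (m + 1) ≤ ρ * v m + b) :
    v n ≤ b / (1 - ρ) := by
  induction n with
  | zero => exact h0
  | succ n ih =>
    have hfixed : ρ * (b / (1 - ρ)) + b = b / (1 - ρ) := by
      field_simp [(sub_pos.mpr hρ1).ne']
      ring
    calc v (n + 1) ≤ ρ * v n + b := hstep n n.lt_succ_self
      _ ≤ ρ * (b / (1 - ρ)) + b := by
          gcongr
          exact ih fun m hm ↦ hstep m (hm.trans n.lt_succ_self)
      _ = b / (1 - ρ) := hfixed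

section CoupledRecursion

variable {C α θ h ε E T : ℝ} {u v : ℕ → ℝ}

theorem coupling_le_of_le_mul {c : ℝ} (hC : 0 ≤ C) (hc : 0 ≤ c) (hα : α < 1) (hh : 0 ≤ h)
    (hεh : ε ≤ c * h) (hch : C * c * h ≤ (1 - α) / 2) :
    C * ε + 2 * C * c / (1 - α) * h * (α + C * ε) ≤ 2 * C * c / (1 - α) * h := by
  have h1α : 0 < 1 - α := by linarith
  have hCε : C * ε ≤ C * c * h := by rw [mul_assoc]; gcongr
  have hθ : 2 * C * c / (1 - α) * ((1 - α) / 2) = C * c := by field_simp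
  have : C * ε ≤ 2 * C * c / (1 - α) * h * (1 - α - C * ε) :=
    calc C * ε ≤ C * c * h := hCε
      _ = 2 * C * c / (1 - α) * h * ((1 - α) / 2) := by rw [← hθ]; ring
      _ ≤ 2 * C * c / (1 - α) * h * (1 - α - C * ε) := by gcongr; linarith
  linarith

theorem le_of_coupled_recursion (hC : 0 ≤ C) (hθ : 0 ≤ θ) (hh : 0 ≤ h) (hE : 0 ≤ E)
    (hv : ∀ m, 0 ≤ v m) (hcoupling : C * ε + θ * h * (α + C * ε) ≤ θ * h)
    (hu_step : ∀ m, u (m + 1) ≤ (1 + C * h) * u m + C * ε * v m + C * h * E)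
    (hv_step : ∀ m, v (m + 1) ≤ C * u m + (α + C * ε) * v m + C * E)
    (hu0 : u 0 = 0) (hv0 : v 0 = 0) {m : ℕ} (hm : m * h ≤ T) :
    u m ≤ C * (1 + θ) * T * exp (C * (1 + θ) * T) * E := by
  have hw := le_mul_exp_of_le_one_add_mul (w := fun m ↦ u m + θ * h * v m) (by positivity)
    hh hE (by simp [hu0, hv0]) (fun m ↦ weighted_sum_step_le hC hθ hh (hv m) hcoupling
      (hu_step m) (hv_step m)) hm
  have : 0 ≤ θ * h * v m := by have := hv m; positivity
  linarith

theorem le_of_contracting_recursion {B : ℝ} {n : ℕ} (hC : 0 ≤ C) (hα0 : 0 ≤ α) (hα : α < 1)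
    (hB : 0 ≤ B) (hh : 0 ≤ h) (hE : 0 ≤ E) (hv : ∀ m, 0 ≤ v m) (hCε : C * ε ≤ (1 - α) / 2)
    (hv_step : ∀ m, v (m + 1) ≤ C * u m + (α + C * ε) * v m + C * E) (hv0 : v 0 = 0)
    (hu : ∀ m : ℕ, m * h ≤ T → u m ≤ B * E) (hn : n * h ≤ T) :
    v n ≤ 2 * C * (B + 1) / (1 - α) * E := by
  have h1α : 0 < 1 - α := by linarith
  have hρ : 1 - (1 + α) / 2 = (1 - α) / 2 := by ring
  have hbound : 2 * C * (B + 1) / (1 - α) * E = C * (B + 1) * E / (1 - (1 + α) / 2) := by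
    rw [hρ]; field_simp
  rw [hbound]
  refine le_div_one_sub_of_le_mul_add (by positivity) (by linarith)
    (by rw [hv0, hρ]; positivity) fun m hm ↦ ?_
  have := hv m
  have := hu m (le_trans (by gcongr) hn)
  calc v (m + 1) ≤ C * u m + (α + C * ε) * v m + C * E := hv_step m
    _ ≤ C * (B * E) + (1 + α) / 2 * v m + C * E := by
        gcongr
        linarith
    _ = (1 + α) / 2 * v m + C * (B + 1) * E := by ring

end CoupledRecursion

/-- discrete stability lemma for coupled error recursions with a
contracting algebraic component: u_m, v_m ≤ C' ε^{ν+1}/h on mh ≤ T. -/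
theorem stmt16 (C c α T : ℝ) (hC : 0 < C) (hc : 0 < c)
    (hα0 : 0 < α) (hα : α < 1) (hT : 0 < T) :
    ∃ h₀ > 0, ∃ C' > 0, ∀ (ν : ℕ) (h ε : ℝ) (u v : ℕ → ℝ),
      0 < h → h ≤ h₀ → 0 < ε → ε ≤ c * h →
      (∀ m, 0 ≤ u m) → (∀ m, 0 ≤ v m) →
      (∀ m, u (m+1) ≤ (1 + C * h) * u m + C * ε * v m + C * ε ^ (ν+1)) →
      (∀ m, v (m+1) ≤ C * u m + (α + C * ε) * v m + C * ε ^ (ν+1) / h) →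
      u 0 = 0 → v 0 = 0 →
      ∀ m : ℕ, (m : ℝ) * h ≤ T →
        u m ≤ C' * ε ^ (ν+1) / h ∧ v m ≤ C' * ε ^ (ν+1) / h := by
  have h1α : 0 < 1 - α := by linarith
  set θ := 2 * C * c / (1 - α)
  set M := C * (1 + θ) * T * exp (C * (1 + θ) * T)
  set D := 2 * C * (M + 1) / (1 - α)
  refine ⟨(1 - α) / (2 * C * c), by positivity, M + D, by positivity, ?_⟩
  intro ν h ε u v hh hh₀ hε hεh hu hv hu_step hv_step hu0 hv0 m hm
  set E := ε ^ (ν + 1) / h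
  have hE : 0 ≤ E := by positivity
  have hδ : ε ^ (ν + 1) = h * E := by simp only [E]; field_simp
  have hch : C * c * h ≤ (1 - α) / 2 :=
    calc C * c * h ≤ C * c * ((1 - α) / (2 * C * c)) := by gcongr
      _ = (1 - α) / 2 := by field_simp
  have hu_step' : ∀ m, u (m + 1) ≤ (1 + C * h) * u m + C * ε * v m + C * h * E := fun m ↦
    (hu_step m).trans_eq (by rw [hδ]; ring)
  have hv_step' : ∀ m, v (m + 1) ≤ C * u m + (α + C * ε) * v m + C * E := fun m ↦
    (hv_step m).trans_eq (by rw [hδ]; field_simp)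
  have hU : ∀ m : ℕ, (m : ℝ) * h ≤ T → u m ≤ M * E := fun m hm ↦
    le_of_coupled_recursion hC.le (by positivity) hh.le hE hv
      (coupling_le_of_le_mul hC.le hc.le hα hh.le hεh hch) hu_step' hv_step' hu0 hv0 hm
  have hCε : C * ε ≤ (1 - α) / 2 := (mul_le_mul_of_nonneg_left hεh hC.le).trans (by linarith)
  have hV := le_of_contracting_recursion hC.le hα0.le hα (by positivity) hh.le hE hv hCε
    hv_step' hv0 hU hm
  rw [mul_div_assoc, add_mul]
  exact ⟨by linarith [hU m hm, (by positivity : 0 ≤ D * E)],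
    by linarith [(by positivity : 0 ≤ M * E)]⟩
end

section
/- Let R(z) = e_s^T(I − zA)^{-1}𝟙 with A invertible, and define the first-correction amplification vector r⃗(z) = (I − (z/M)A)^{-1} 𝟙 + (I − (z/M)A)^{-1} z (S − AP/M) ℛ⃗₀(z), where ℛ⃗₀(z) → 0 as |z| → ∞ componentwise and S, AP/M are fixed matrices. Then ℛ₁(z) := e_s^T r⃗(z) satisfies lim_{|z|→∞} ℛ₁(z) = 0. -/
open Filter Matrix

/-- the first-correction amplification factor
ℛ₁(z) = eₛᵀ [ (I − (z/M)A)⁻¹ 𝟙 + (I − (z/M)A)⁻¹ z (S − AP/M) ℛ⃗₀(z) ]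
tends to 0 as |z| → ∞, given A invertible and ℛ⃗₀(z) → 0 componentwise. -/
theorem stmt19 (n Mq q : ℕ) (hM : 0 < Mq)
    (A : Matrix (Fin (n+1)) (Fin (n+1)) ℝ) (hA : IsUnit A.det)
    (S P : Matrix (Fin (n+1)) (Fin q) ℝ)
    (R0 : ℝ → Fin q → ℝ)
    (hR0 : ∀ k, Tendsto (fun z => R0 z k) (cocompact ℝ) (nhds 0)) :
    Tendsto (fun z : ℝ =>
        ((((1 : Matrix (Fin (n+1)) (Fin (n+1)) ℝ) - (z / Mq) • A)⁻¹ *ᵥ fun _ => 1)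
          + z • (((1 : Matrix (Fin (n+1)) (Fin (n+1)) ℝ) - (z / Mq) • A)⁻¹ *ᵥ
              ((S - (Mq : ℝ)⁻¹ • (A * P)) *ᵥ R0 z))) (Fin.last n))
      (cocompact ℝ) (nhds 0) := by
  have hMne : (Mq : ℝ) ≠ 0 := Nat.cast_ne_zero.mpr hM.ne'
  set C : Matrix (Fin (n+1)) (Fin q) ℝ := S - (Mq : ℝ)⁻¹ • (A * P) with hC
  set F : ℝ → Matrix (Fin (n+1)) (Fin (n+1)) ℝ :=
    fun u => u • (1 : Matrix (Fin (n+1)) (Fin (n+1)) ℝ) - (Mq : ℝ)⁻¹ • A with hFdef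
  have hF0 : F 0 = (-(Mq : ℝ)⁻¹) • A := by
    simp [hFdef, neg_smul]
  have hdet0 : (F 0).det ≠ 0 := by
    rw [hF0, Matrix.det_smul]
    exact mul_ne_zero (pow_ne_zero _ (neg_ne_zero.mpr (inv_ne_zero hMne))) hA.ne_zero
  have hFc : Continuous F := by
    exact (continuous_id.smul continuous_const).sub continuous_const
  have hz0 : Tendsto (fun z : ℝ => z⁻¹) (cocompact ℝ) (nhds 0) := by
    rw [← Metric.cobounded_eq_cocompact]
    exact tendsto_inv₀_cobounded
  -- continuity of the inverse at F 0
  have hinvc : ContinuousAt Inv.inv (F 0) := by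
    refine continuousAt_matrix_inv _ ?_
    rw [Ring.inverse_eq_inv']
    exact continuousAt_inv₀ hdet0
  have hG : Tendsto (fun z : ℝ => (F z⁻¹)⁻¹) (cocompact ℝ) (nhds ((F 0)⁻¹)) :=
    (hinvc.comp hFc.continuousAt).tendsto.comp hz0
  have hGij : ∀ i j, Tendsto (fun z : ℝ => (F z⁻¹)⁻¹ i j) (cocompact ℝ)
      (nhds ((F 0)⁻¹ i j)) := fun i j =>
    tendsto_pi_nhds.mp (tendsto_pi_nhds.mp hG i) j
  have hdetc : Tendsto (fun z : ℝ => (F z⁻¹).det) (cocompact ℝ) (nhds (F 0).det) :=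
    (hFc.matrix_det.continuousAt).tendsto.comp hz0
  have hev1 : ∀ᶠ z : ℝ in cocompact ℝ, (F z⁻¹).det ≠ 0 := hdetc.eventually_ne hdet0
  have hev0 : ∀ᶠ z : ℝ in cocompact ℝ, z ≠ 0 := by
    have : ({(0 : ℝ)} : Set ℝ)ᶜ ∈ cocompact ℝ := isCompact_singleton.compl_mem_cocompact
    filter_upwards [this] with z hz
    simpa using hz
  set i0 := Fin.last n
  -- the auxiliary function with the limit computed
  have key : Tendsto (fun z : ℝ =>
      z⁻¹ * (∑ j, (F z⁻¹)⁻¹ i0 j * 1)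
        + ∑ j, (F z⁻¹)⁻¹ i0 j * (∑ k, C j k * R0 z k)) (cocompact ℝ)
      (nhds (0 * (∑ j, (F 0)⁻¹ i0 j * 1) + ∑ j : Fin (n+1), (F 0)⁻¹ i0 j * 0)) := by
    refine Tendsto.add (hz0.mul ?_) ?_
    · exact tendsto_finset_sum _ fun j _ => (hGij i0 j).mul tendsto_const_nhds
    · refine tendsto_finset_sum _ fun j _ => (hGij i0 j).mul ?_
      have : Tendsto (fun z : ℝ => ∑ k, C j k * R0 z k) (cocompact ℝ)
          (nhds (∑ k : Fin q, C j k * 0)) :=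
        tendsto_finset_sum _ fun k _ => tendsto_const_nhds.mul (hR0 k)
      simpa using this
  have key' : Tendsto (fun z : ℝ =>
      z⁻¹ * (∑ j, (F z⁻¹)⁻¹ i0 j * 1)
        + ∑ j, (F z⁻¹)⁻¹ i0 j * (∑ k, C j k * R0 z k)) (cocompact ℝ) (nhds 0) := by
    simpa using key
  refine key'.congr' ?_
  filter_upwards [hev0, hev1] with z hz hdet
  -- rewrite (1 - (z/M)A)⁻¹ = z⁻¹ • (F z⁻¹)⁻¹
  have hB : (1 : Matrix (Fin (n+1)) (Fin (n+1)) ℝ) - (z / Mq) • A = z • F z⁻¹ := by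
    rw [hFdef]
    rw [smul_sub, smul_smul, smul_smul, mul_inv_cancel₀ hz, one_smul, div_eq_mul_inv]
  have hBinv : ((1 : Matrix (Fin (n+1)) (Fin (n+1)) ℝ) - (z / Mq) • A)⁻¹
      = z⁻¹ • (F z⁻¹)⁻¹ := by
    rw [hB]
    have := Matrix.inv_smul' (Units.mk0 z hz) (isUnit_iff_ne_zero.mpr hdet) (A := F z⁻¹)
    simpa [Units.smul_def] using this
  rw [hBinv]
  simp only [Pi.add_apply, Pi.smul_apply, Matrix.smul_mulVec, Matrix.mulVec,
    dotProduct, smul_eq_mul, smul_smul, mul_inv_cancel₀ hz, one_mul,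
    Finset.mul_sum]
end
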